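/- The element Δ(Λ) lies in the cotensor product of the comodules I_L and I_R: (1 ⊗ τ_R)(Δ(Λ)) = (τ_L ⊗ 1)(Δ(Λ)) in U_q(sl_2)^{⊗3}, where τ_R and τ_L are the left and right coactions defined on the coideal subalgebras I_R (generated by EK⁻¹, F, K⁻¹, Λ) and I_L (generated by E, FK, K, Λ). -/
import Mathlib


open TensorProduct

variable {𝕜 A : Type*} [Field 𝕜] [Ring A] [Algebra 𝕜 A]

/-- The Casimir element `Λ = (q − q⁻¹)² E F + q⁻¹ K + q K⁻¹` of `U_q(sl₂)`. -/
def casimir (q : 𝕜) (E F K K' : A) : A :=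
  (q - q⁻¹) ^ 2 • (E * F) + q⁻¹ • K + q • K'

/-- The set of generators of the left coideal subalgebra `I_R`. -/
def IRgens (q : 𝕜) (E F K K' : A) : Set A := {E * K', F, K', casimir q E F K K'}

/-- The set of generators of the right coideal subalgebra `I_L`. -/
def ILgens (q : 𝕜) (E F K K' : A) : Set A := {E, F * K, K, casimir q E F K K'}

set_option maxHeartbeats 2000000 in
/-- `Δ(Λ)` lies in the cotensor product of `I_L` and `I_R`:
`(1 ⊗ τ_R)(Δ(Λ)) = (τ_L ⊗ 1)(Δ(Λ))` in `U_q(sl₂)^{⊗3}`, where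
`Δ(Λ) = Λ⊗K⁻¹ + K⊗Λ − (q+q⁻¹)K⊗K⁻¹ + (q−q⁻¹)²(E⊗F + q⁻² FK⊗EK⁻¹)` and the two sides
are compared via the canonical associator. -/
theorem casimir_cotensor (q : 𝕜) (hq : q ≠ 0) (hroot : ∀ n : ℕ, 0 < n → q ^ n ≠ 1)
    (E F K K' : A)
    (hKK' : K * K' = 1) (hK'K : K' * K = 1)
    (hKE : K * E = q ^ 2 • (E * K))
    (hKF : K * F = (q ^ 2)⁻¹ • (F * K))
    (hEF : E * F - F * E = (q - q⁻¹)⁻¹ • (K - K'))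
    -- the coactions `τ_R : I_R → U_q(sl₂) ⊗ I_R` and `τ_L : I_L → I_L ⊗ U_q(sl₂)`,
    -- viewed with values in `U_q(sl₂) ⊗ U_q(sl₂)`
    (τR : (Algebra.adjoin 𝕜 (IRgens q E F K K')) →ₐ[𝕜] A ⊗[𝕜] A)
    (τL : (Algebra.adjoin 𝕜 (ILgens q E F K K')) →ₐ[𝕜] A ⊗[𝕜] A)
    -- memberships of the generators
    (hmEK' : E * K' ∈ Algebra.adjoin 𝕜 (IRgens q E F K K'))
    (hmF : F ∈ Algebra.adjoin 𝕜 (IRgens q E F K K'))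
    (hmK' : K' ∈ Algebra.adjoin 𝕜 (IRgens q E F K K'))
    (hmΛR : casimir q E F K K' ∈ Algebra.adjoin 𝕜 (IRgens q E F K K'))
    (hmE : E ∈ Algebra.adjoin 𝕜 (ILgens q E F K K'))
    (hmFK : F * K ∈ Algebra.adjoin 𝕜 (ILgens q E F K K'))
    (hmK : K ∈ Algebra.adjoin 𝕜 (ILgens q E F K K'))
    (hmΛL : casimir q E F K K' ∈ Algebra.adjoin 𝕜 (ILgens q E F K K'))
    -- defining formulas for `τ_R` on the generators of `I_R`
    (hτREK' : τR ⟨E * K', hmEK'⟩ = K' ⊗ₜ (E * K'))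
    (hτRF : τR ⟨F, hmF⟩ =
      K ⊗ₜ F - (q⁻¹ ^ 3 * (q - q⁻¹) ^ 2) • ((F * F * K) ⊗ₜ (E * K'))
        + (q⁻¹ * (q + q⁻¹)) • ((F * K) ⊗ₜ K')
        - q⁻¹ • ((F * K) ⊗ₜ casimir q E F K K'))
    (hτRK' : τR ⟨K', hmK'⟩ = 1 ⊗ₜ K' - (q⁻¹ * (q - q⁻¹) ^ 2) • (F ⊗ₜ (E * K')))
    (hτRΛ : τR ⟨casimir q E F K K', hmΛR⟩ = 1 ⊗ₜ casimir q E F K K')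
    -- defining formulas for `τ_L` on the generators of `I_L`
    (hτLE : τL ⟨E, hmE⟩ = E ⊗ₜ K)
    (hτLFK : τL ⟨F * K, hmFK⟩ =
      (F * K) ⊗ₜ K' - (q⁻¹ * (q - q⁻¹) ^ 2) • (E ⊗ₜ (F * F * K))
        + (q * (q + q⁻¹)) • (K ⊗ₜ F) - q • (casimir q E F K K' ⊗ₜ F))
    (hτLK : τL ⟨K, hmK⟩ = K ⊗ₜ 1 - (q⁻¹ * (q - q⁻¹) ^ 2) • (E ⊗ₜ (F * K)))
    (hτLΛ : τL ⟨casimir q E F K K', hmΛL⟩ = casimir q E F K K' ⊗ₜ 1) :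
    -- `(1 ⊗ τ_R)(Δ(Λ)) = (τ_L ⊗ 1)(Δ(Λ))`
    casimir q E F K K' ⊗ₜ τR ⟨K', hmK'⟩ + K ⊗ₜ τR ⟨casimir q E F K K', hmΛR⟩
        - (q + q⁻¹) • (K ⊗ₜ τR ⟨K', hmK'⟩)
        + (q - q⁻¹) ^ 2 •
          (E ⊗ₜ τR ⟨F, hmF⟩ + (q ^ 2)⁻¹ • ((F * K) ⊗ₜ τR ⟨E * K', hmEK'⟩)) =
      (TensorProduct.assoc 𝕜 A A A)
        (τL ⟨casimir q E F K K', hmΛL⟩ ⊗ₜ K' + τL ⟨K, hmK⟩ ⊗ₜ casimir q E F K K'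
          - (q + q⁻¹) • (τL ⟨K, hmK⟩ ⊗ₜ K')
          + (q - q⁻¹) ^ 2 •
            (τL ⟨E, hmE⟩ ⊗ₜ F + (q ^ 2)⁻¹ • (τL ⟨F * K, hmFK⟩ ⊗ₜ (E * K')))) := by
  rw [hτRK', hτRΛ, hτRF, hτREK', hτLΛ, hτLK, hτLE, hτLFK]
  simp only [tmul_add, tmul_sub, add_tmul, sub_tmul, ← smul_tmul', tmul_smul, smul_add, smul_sub,
    smul_smul, map_add, map_sub, map_smul, TensorProduct.assoc_tmul]
  match_scalars
  all_goals field_simp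
  all_goals try ring
  all_goals try (field_simp [inv_pow]; ring)
  all_goals simp
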